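/- (Corollary 3, interpolating single-draw bound) In the random-subset setting, assume L_{Z(S)}(W) = 0 almost surely under P_{WZ̃S}, and let δ ∈ (0,1). Then with probability at least 1 − δ over (W, Z̃, S) ~ P_{WZ̃S}: L_{Z(S̄)}(W) ≤ (ı(W,S|Z̃) + log(1/δ))/(n·log 2), where ı(W,S|Z̃) = log(dP_{WZ̃S}/d(P_{W|Z̃}P_{Z̃}P_S)) and P_{W|Z̃} is the marginalization of P_S P_{W|Z̃S} over S. -/

import Mathlib

open MeasureTheory ProbabilityTheory Real
open scoped ENNReal

noncomputable section

/-- Fair coin (`Bernoulli(1/2)`) distribution on `Bool`. -/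
def coin : Measure Bool := (PMF.uniformOfFintype Bool).toMeasure

instance : IsProbabilityMeasure coin := PMF.toMeasure.isProbabilityMeasure _

/-- Relative entropy (KL divergence) `∫ log (dμ/dν) dμ`. -/
def klDiv' {α : Type*} [MeasurableSpace α] (μ ν : Measure α) : ℝ :=
  ∫ x, Real.log ((μ.rnDeriv ν x).toReal) ∂μ

/-- Training loss in the random-subset setting. -/
def trainLoss {Z W : Type*} (n : ℕ) (loss : W → Z → ℝ)
    (x : ((Fin n × Bool → Z) × (Fin n → Bool)) × W) : ℝ :=
  (∑ i, loss x.2 (x.1.1 (i, x.1.2 i))) / n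

/-- Test loss in the random-subset setting. -/
def testLoss {Z W : Type*} (n : ℕ) (loss : W → Z → ℝ)
    (x : ((Fin n × Bool → Z) × (Fin n → Bool)) × W) : ℝ :=
  (∑ i, loss x.2 (x.1.1 (i, !x.1.2 i))) / n

/-- Population loss. -/
def popLoss {Z W : Type*} [MeasurableSpace Z] (PZ : Measure Z)
    (loss : W → Z → ℝ) (w : W) : ℝ :=
  ∫ z, loss w z ∂PZ

lemma aux_measurable_map_pair {α β : Type*} [MeasurableSpace α] [MeasurableSpace β]
    (κ : Kernel α β) [IsSFiniteKernel κ] :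
    Measurable fun a => (κ a).map (fun b => (a, b)) := by
  apply Measure.measurable_of_measurable_coe
  intro s hs
  have h : ∀ a, ((κ a).map (fun b => (a, b))) s = κ a (Prod.mk a ⁻¹' s) := fun a =>
    Measure.map_apply measurable_prodMk_left hs
  simp_rw [h]
  exact Kernel.measurable_kernel_prodMk_left hs

lemma coin_singleton (b : Bool) : coin {b} = 2⁻¹ := by
  show (PMF.uniformOfFintype Bool).toMeasure {b} = 2⁻¹
  rw [PMF.toMeasure_apply_singleton _ _ (measurableSet_singleton b)]
  simp [PMF.uniformOfFintype_apply]

lemma expo_le_two {c : ℝ} (h1 : c ≤ 1) :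
    ENNReal.ofReal (Real.exp (Real.log 2 * c)) ≤ 2 := by
  rw [show (2:ℝ≥0∞) = ENNReal.ofReal 2 by simp]
  apply ENNReal.ofReal_le_ofReal
  calc Real.exp (Real.log 2 * c) ≤ Real.exp (Real.log 2 * 1) := by
        apply Real.exp_le_exp.mpr
        have := Real.log_nonneg (by norm_num : (1:ℝ) ≤ 2)
        nlinarith
    _ = 2 := by rw [mul_one, Real.exp_log two_pos]

lemma coin_bound {a b : ℝ} (ha : a ∈ Set.Icc (0:ℝ) 1) (hb : b ∈ Set.Icc (0:ℝ) 1) :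
    ((if b = 0 then (1:ℝ≥0∞) else 0) * ENNReal.ofReal (Real.exp (Real.log 2 * a))) * 2⁻¹ +
    ((if a = 0 then (1:ℝ≥0∞) else 0) * ENNReal.ofReal (Real.exp (Real.log 2 * b))) * 2⁻¹ ≤ 1 := by
  have h2 : (2:ℝ≥0∞) * 2⁻¹ = 1 := ENNReal.mul_inv_cancel (by norm_num) (by norm_num)
  by_cases ha0 : a = 0 <;> by_cases hb0 : b = 0 <;>
    simp only [ha0, hb0, if_true, if_false, one_mul, zero_mul, zero_add, add_zero, mul_zero,
      Real.exp_zero, ENNReal.ofReal_one]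
  · rw [ENNReal.inv_two_add_inv_two]
  · calc ENNReal.ofReal (Real.exp (Real.log 2 * b)) * 2⁻¹ ≤ 2 * 2⁻¹ :=
        mul_le_mul_left (expo_le_two hb.2) _
      _ = 1 := h2
  · calc ENNReal.ofReal (Real.exp (Real.log 2 * a)) * 2⁻¹ ≤ 2 * 2⁻¹ :=
        mul_le_mul_left (expo_le_two ha.2) _
      _ = 1 := h2
  · simp

/-- Corollary 3: interpolating single-draw bound. -/
theorem stmt13
    {Z W : Type*} [MeasurableSpace Z] [MeasurableSpace W]
    (n : ℕ) (hn : 0 < n)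
    (PZ : Measure Z) [IsProbabilityMeasure PZ]
    (loss : W → Z → ℝ) (hlossmeas : Measurable (Function.uncurry loss))
    (hloss : ∀ w z, loss w z ∈ Set.Icc (0:ℝ) 1)
    (K : Kernel ((Fin n × Bool → Z) × (Fin n → Bool)) W) [IsMarkovKernel K]
    (hK : ∀ zt s zt' s', (∀ i, zt (i, s i) = zt' (i, s' i)) → K (zt, s) = K (zt', s'))
    (PZt : Measure ((Fin n × Bool) → Z)) (hPZt : PZt = Measure.pi fun _ => PZ)
    (PS : Measure (Fin n → Bool)) (hPS : PS = Measure.pi fun _ => coin)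
    (PWZS : Measure (((Fin n × Bool → Z) × (Fin n → Bool)) × W))
    (hPWZS : PWZS = (PZt.prod PS).bind fun p => (K p).map fun w => (p, w))
    (M : Kernel (Fin n × Bool → Z) W) [IsMarkovKernel M]
    (hM : ∀ z, M z = PS.bind fun s => K (z, s))
    (MJ : Measure (((Fin n × Bool → Z) × (Fin n → Bool)) × W))
    (hMJ : MJ = (PZt.prod PS).bind fun p => (M p.1).map fun w => (p, w))
    (hinterp : ∀ᵐ x ∂PWZS, trainLoss n loss x = 0)
    (hac1 : PWZS ≪ MJ) (hac2 : MJ ≪ PWZS)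
    (δ : ℝ) (hδ0 : 0 < δ) (hδ1 : δ < 1) :
    ENNReal.ofReal (1 - δ) ≤ PWZS {x |
      testLoss n loss x
        ≤ (Real.log ((PWZS.rnDeriv MJ x).toReal) + Real.log (1/δ)) / (n * Real.log 2)} := by
  classical
  haveI hPZtP : IsProbabilityMeasure PZt := by rw [hPZt]; infer_instance
  haveI hPSP : IsProbabilityMeasure PS := by rw [hPS]; infer_instance
  have hKmeas : Measurable fun p : (Fin n × Bool → Z) × (Fin n → Bool) =>
      (K p).map fun w => (p, w) := aux_measurable_map_pair (β := W) K
  have hMmeas : Measurable fun p : (Fin n × Bool → Z) × (Fin n → Bool) =>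
      (M p.1).map fun w => (p, w) := by
    have := aux_measurable_map_pair (M.comap (Prod.fst : (Fin n × Bool → Z) × (Fin n → Bool) → Fin n × Bool → Z) measurable_fst)
    simpa [Kernel.comap_apply] using this
  haveI : IsProbabilityMeasure PWZS := by
    constructor
    rw [hPWZS, Measure.bind_apply MeasurableSet.univ hKmeas.aemeasurable]
    have h : ∀ p : (Fin n × Bool → Z) × (Fin n → Bool),
        ((K p).map fun w => (p, w)) Set.univ = 1 := fun p => by
      rw [Measure.map_apply measurable_prodMk_left MeasurableSet.univ]; simp
    simp_rw [h]; simp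
  haveI : IsProbabilityMeasure MJ := by
    constructor
    rw [hMJ, Measure.bind_apply MeasurableSet.univ hMmeas.aemeasurable]
    have h : ∀ p : (Fin n × Bool → Z) × (Fin n → Bool),
        ((M p.1).map fun w => (p, w)) Set.univ = 1 := fun p => by
      rw [Measure.map_apply measurable_prodMk_left MeasurableSet.univ]; simp
    simp_rw [h]; simp
  set r := PWZS.rnDeriv MJ with hr
  have hr_meas : Measurable r := Measure.measurable_rnDeriv _ _
  -- measurability of coordinate losses
  have hsel : ∀ (i : Fin n) (c : Bool → Bool),
      Measurable fun x : ((Fin n × Bool → Z) × (Fin n → Bool)) × W =>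
        loss x.2 (x.1.1 (i, c (x.1.2 i))) := by
    intro i c
    have h1 : Measurable fun x : ((Fin n × Bool → Z) × (Fin n → Bool)) × W =>
        x.1.1 (i, c (x.1.2 i)) := by
      have heq : (fun x : ((Fin n × Bool → Z) × (Fin n → Bool)) × W =>
          x.1.1 (i, c (x.1.2 i))) = fun x =>
          if x.1.2 i = true then x.1.1 (i, c true) else x.1.1 (i, c false) := by
        funext x; cases h : x.1.2 i <;> simp [h]
      rw [heq]
      have hm : Measurable fun x : ((Fin n × Bool → Z) × (Fin n → Bool)) × W =>
          x.1.2 i := (measurable_pi_apply i).comp measurable_fst.snd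
      have hset : MeasurableSet {x : ((Fin n × Bool → Z) × (Fin n → Bool)) × W |
          x.1.2 i = true} := hm (measurableSet_singleton true)
      exact Measurable.ite hset
        ((measurable_pi_apply (i, c true)).comp measurable_fst.fst)
        ((measurable_pi_apply (i, c false)).comp measurable_fst.fst)
    exact hlossmeas.comp (measurable_snd.prodMk h1)
  set T : (((Fin n × Bool → Z) × (Fin n → Bool)) × W) → ℝ :=
    fun x => ∑ i, loss x.2 (x.1.1 (i, !x.1.2 i)) with hT
  set H : (((Fin n × Bool → Z) × (Fin n → Bool)) × W) → ℝ≥0∞ :=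
    fun x => ENNReal.ofReal (Real.exp (Real.log 2 * T x)) with hH
  set F : (((Fin n × Bool → Z) × (Fin n → Bool)) × W) → ℝ≥0∞ :=
    fun x => ∏ i, ((if loss x.2 (x.1.1 (i, x.1.2 i)) = 0 then (1:ℝ≥0∞) else 0) *
      ENNReal.ofReal (Real.exp (Real.log 2 * loss x.2 (x.1.1 (i, !x.1.2 i))))) with hF
  have hT_meas : Measurable T := Finset.measurable_sum _ fun i _ => hsel i (fun b => !b)
  have hH_meas : Measurable H :=
    ENNReal.measurable_ofReal.comp (Real.measurable_exp.comp (hT_meas.const_mul _))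
  have hF_meas : Measurable F := by
    apply Finset.measurable_prod
    intro i _
    apply Measurable.mul
    · exact Measurable.ite ((hsel i id) (measurableSet_singleton 0))
        measurable_const measurable_const
    · exact ENNReal.measurable_ofReal.comp
        (Real.measurable_exp.comp ((hsel i (fun b => !b)).const_mul _))
  -- Step A : ∫⁻ F dMJ ≤ 1
  have hFMJ : ∫⁻ x, F x ∂MJ ≤ 1 := by
    rw [hMJ, Measure.lintegral_bind hMmeas.aemeasurable hF_meas.aemeasurable]
    have hmap : ∀ p : (Fin n × Bool → Z) × (Fin n → Bool),
        ∫⁻ x, F x ∂((M p.1).map fun w => (p, w)) = ∫⁻ w, F (p, w) ∂(M p.1) :=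
      fun p => lintegral_map hF_meas measurable_prodMk_left
    simp_rw [hmap]
    have hinner_meas : Measurable fun p : (Fin n × Bool → Z) × (Fin n → Bool) =>
        ∫⁻ w, F (p, w) ∂(M p.1) := by
      have := Measurable.lintegral_kernel_prod_right
        (κ := M.comap Prod.fst measurable_fst) (f := fun p w => F (p, w)) hF_meas
      simpa [Kernel.comap_apply] using this
    rw [lintegral_prod _ hinner_meas.aemeasurable]
    have hZ : ∀ z : Fin n × Bool → Z,
        (∫⁻ s, ∫⁻ w, F ((z, s), w) ∂(M z) ∂PS) ≤ 1 := by
      intro z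
      have hswap : AEMeasurable (Function.uncurry fun s w => F ((z, s), w))
          (PS.prod (M z)) := by
        apply Measurable.aemeasurable
        exact hF_meas.comp
          ((measurable_const.prodMk measurable_fst).prodMk measurable_snd)
      rw [lintegral_lintegral_swap hswap]
      have hW : ∀ w, (∫⁻ s, F ((z, s), w) ∂PS) ≤ 1 := by
        intro w
        have hps : ∀ s : Fin n → Bool, PS {s} = ∏ _i : Fin n, (2:ℝ≥0∞)⁻¹ := by
          intro s
          rw [hPS, ← Set.univ_pi_singleton s, Measure.pi_pi]
          exact Finset.prod_congr rfl fun i _ => coin_singleton (s i)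
        rw [lintegral_fintype]
        have hfs : ∀ s : Fin n → Bool, F ((z, s), w) * PS {s}
            = ∏ i, (((if loss w (z (i, s i)) = 0 then (1:ℝ≥0∞) else 0) *
              ENNReal.ofReal (Real.exp (Real.log 2 * loss w (z (i, !s i))))) * 2⁻¹) := by
          intro s
          rw [hps s, hF, ← Finset.prod_mul_distrib]
        simp_rw [hfs]
        rw [← Fintype.prod_sum (fun (i : Fin n) (b : Bool) =>
          ((if loss w (z (i, b)) = 0 then (1:ℝ≥0∞) else 0) *
            ENNReal.ofReal (Real.exp (Real.log 2 * loss w (z (i, !b))))) * 2⁻¹)]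
        refine le_trans (Finset.prod_le_prod' (g := fun _ => (1:ℝ≥0∞)) ?_) (by simp)
        intro i _
        rw [Fintype.sum_bool]
        simpa using coin_bound (hloss w (z (i, false))) (hloss w (z (i, true)))
      calc ∫⁻ w, ∫⁻ s, F ((z, s), w) ∂PS ∂(M z) ≤ ∫⁻ w, 1 ∂(M z) := lintegral_mono hW
        _ = 1 := by simp
    calc ∫⁻ z, ∫⁻ s, ∫⁻ w, F ((z, s), w) ∂(M (z, s).1) ∂PS ∂PZt
        ≤ ∫⁻ z, 1 ∂PZt := lintegral_mono hZ
      _ = 1 := by simp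
  -- Step B : change of measure
  have hrfin : ∀ᵐ x ∂MJ, r x < ∞ := Measure.rnDeriv_lt_top PWZS MJ
  have hrpos : ∀ᵐ x ∂PWZS, 0 < r x := Measure.rnDeriv_pos hac1
  have hrposMJ : ∀ᵐ x ∂MJ, 0 < r x := hac2.ae_le hrpos
  have hHr_meas : Measurable fun x => H x * (r x)⁻¹ := hH_meas.mul hr_meas.inv
  have hFr_meas : Measurable fun x => F x * (r x)⁻¹ := hF_meas.mul hr_meas.inv
  have hHFae : ∀ᵐ x ∂PWZS, H x * (r x)⁻¹ = F x * (r x)⁻¹ := by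
    filter_upwards [hinterp] with x hx
    have hsum : ∑ i, loss x.2 (x.1.1 (i, x.1.2 i)) = 0 := by
      unfold trainLoss at hx
      rcases div_eq_zero_iff.mp hx with h | h
      · exact h
      · exact absurd h (by positivity)
    have hzero : ∀ i ∈ Finset.univ, loss x.2 (x.1.1 (i, x.1.2 i)) = 0 :=
      (Finset.sum_eq_zero_iff_of_nonneg (fun i _ => (hloss _ _).1)).mp hsum
    have hFH : F x = H x := by
      simp only [hF, hH, hT]
      have h1 : ∀ i ∈ Finset.univ,
          ((if loss x.2 (x.1.1 (i, x.1.2 i)) = 0 then (1:ℝ≥0∞) else 0) *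
            ENNReal.ofReal (Real.exp (Real.log 2 * loss x.2 (x.1.1 (i, !x.1.2 i)))))
          = ENNReal.ofReal (Real.exp (Real.log 2 * loss x.2 (x.1.1 (i, !x.1.2 i)))) :=
        fun i hi => by rw [if_pos (hzero i hi), one_mul]
      rw [Finset.prod_congr rfl h1, Finset.mul_sum, Real.exp_sum,
        ENNReal.ofReal_prod_of_nonneg (fun i _ => (Real.exp_pos _).le)]
    rw [hFH]
  have key : ∫⁻ x, H x * (r x)⁻¹ ∂PWZS ≤ 1 := by
    rw [lintegral_congr_ae hHFae,
      ← lintegral_rnDeriv_mul hac1 hFr_meas.aemeasurable]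
    have hae : ∀ᵐ x ∂MJ, r x * (F x * (r x)⁻¹) = F x := by
      filter_upwards [hrfin, hrposMJ] with x h1 h2
      calc r x * (F x * (r x)⁻¹) = F x * (r x * (r x)⁻¹) := by ring
        _ = F x := by rw [ENNReal.mul_inv_cancel h2.ne' h1.ne, mul_one]
    rw [lintegral_congr_ae hae]
    exact hFMJ
  -- Step C : Markov
  have hAle : PWZS {x | ENNReal.ofReal (1/δ) ≤ H x * (r x)⁻¹} ≤ ENNReal.ofReal δ := by
    have h1 := mul_meas_ge_le_lintegral₀ (μ := PWZS) hHr_meas.aemeasurable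
      (ENNReal.ofReal (1/δ))
    have h2 : ENNReal.ofReal (1/δ) * PWZS {x | ENNReal.ofReal (1/δ) ≤ H x * (r x)⁻¹} ≤ 1 :=
      h1.trans key
    have h3 : PWZS {x | ENNReal.ofReal (1/δ) ≤ H x * (r x)⁻¹} ≤ (ENNReal.ofReal (1/δ))⁻¹ :=
      ENNReal.le_inv_iff_mul_le.mpr (by rwa [mul_comm] at h2)
    have h4 : (ENNReal.ofReal (1/δ))⁻¹ = ENNReal.ofReal δ := by
      rw [one_div, ENNReal.ofReal_inv_of_pos hδ0, inv_inv]
    rwa [h4] at h3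
  -- Step D : conclude
  set G := {x : ((Fin n × Bool → Z) × (Fin n → Bool)) × W |
    testLoss n loss x ≤ (Real.log ((r x).toReal) + Real.log (1/δ)) / (n * Real.log 2)} with hG
  have hGc : PWZS Gᶜ ≤ ENNReal.ofReal δ := by
    refine le_trans (measure_mono_ae ?_) hAle
    filter_upwards [hrpos, hac1.ae_le hrfin] with x h1 h2 hx
    have hx' : ¬ (testLoss n loss x ≤
        (Real.log ((r x).toReal) + Real.log (1/δ)) / (n * Real.log 2)) := hx
    push_neg at hx'
    have hrt : 0 < (r x).toReal := ENNReal.toReal_pos h1.ne' h2.ne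
    have hn' : (0:ℝ) < n := by exact_mod_cast hn
    have hlog2 : 0 < Real.log 2 := Real.log_pos one_lt_two
    have htest : testLoss n loss x = T x / n := rfl
    rw [htest] at hx'
    have h5 : Real.log ((r x).toReal) + Real.log (1/δ) < Real.log 2 * T x := by
      have h6 := (div_lt_iff₀ (by positivity : (0:ℝ) < ↑n * Real.log 2)).mp hx'
      calc Real.log ((r x).toReal) + Real.log (1/δ)
          < T x / ↑n * (↑n * Real.log 2) := h6
        _ = Real.log 2 * T x := by field_simp
    have h7 : (r x).toReal * (1/δ) < Real.exp (Real.log 2 * T x) := by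
      have := Real.exp_lt_exp.mpr h5
      rwa [Real.exp_add, Real.exp_log hrt,
        Real.exp_log (by positivity : (0:ℝ) < 1/δ)] at this
    have h8 : (r x)⁻¹ = ENNReal.ofReal ((r x).toReal)⁻¹ := by
      rw [ENNReal.ofReal_inv_of_pos hrt, ENNReal.ofReal_toReal h2.ne]
    show ENNReal.ofReal (1/δ) ≤ H x * (r x)⁻¹
    simp only [hH]
    rw [h8, ← ENNReal.ofReal_mul (Real.exp_pos _).le]
    apply ENNReal.ofReal_le_ofReal
    have h9 : 1/δ < Real.exp (Real.log 2 * T x) / (r x).toReal :=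
      (lt_div_iff₀ hrt).mpr (by rw [mul_comm] at h7 ⊢; linarith)
    rw [← div_eq_mul_inv]
    exact h9.le
  have huniv : (1:ℝ≥0∞) ≤ PWZS G + PWZS Gᶜ := by
    calc (1:ℝ≥0∞) = PWZS Set.univ := (measure_univ).symm
      _ = PWZS (G ∪ Gᶜ) := by rw [Set.union_compl_self]
      _ ≤ PWZS G + PWZS Gᶜ := measure_union_le _ _
  have hfinal : ENNReal.ofReal (1 - δ) + ENNReal.ofReal δ ≤ PWZS G + ENNReal.ofReal δ := by
    rw [← ENNReal.ofReal_add (by linarith) hδ0.le]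
    simp only [sub_add_cancel, ENNReal.ofReal_one]
    calc (1:ℝ≥0∞) ≤ PWZS G + PWZS Gᶜ := huniv
      _ ≤ PWZS G + ENNReal.ofReal δ := add_le_add_right hGc _
  exact (ENNReal.add_le_add_iff_right ENNReal.ofReal_ne_top).mp hfinal
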